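/- Let a, c ∈ ℝ with a ≠ c and let b = (a + c)/2. Let a', b', c' ∈ ℝ^m be distinct points, and let α ∈ [0, π] be the angle between the segments [a', b'] and [a', c'], i.e., cos α = ⟨b' − a', c' − a'⟩/(‖b' − a'‖·‖c' − a'‖). Let D be the distortion of the three-point map sending a, b, c to a', b', c' respectively. Then: if α ≤ π/4 then D ≥ 1/cos α, and if α > π/4 then D ≥ √2. In particular D ≥ min(1/cos α, √2). -/

import Mathlib

/-!
By the law of cosines, `‖b' - c'‖² = u² + v² - 2uv cos α` with `u = ‖b' - a'‖`, `v = ‖c' - a'‖`.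
Normalising `λ |a - c| / 2 = 1`, the distortion bounds give `u, ‖b' - c'‖ ≤ D` and `v ≥ 2`.
If `cos α ≤ √2/2`, then `‖b' - c'‖² ≥ u² + v² - √2 uv ≥ v²/2 ≥ 2`, so `D ≥ √2`.
If `cos α ≥ √2/2` but `D cos α < 1`, then `u cos α < 1` and `D < √2 ≤ 2 cos α`, so the right-hand
side of the law of cosines is increasing in `v ≥ 2` and, at `v = 2`, decreasing in `u ≤ D`; hence
`‖b' - c'‖² ≥ D² + 4(1 - D cos α) > D²`.
-/

open scoped RealInnerProductSpace

/-- `g` restricted to `A ⊆ ℝ` (mapping into `ℝᵐ`) has distortion at most `D`. -/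
def HasDistortionAtMost {m : ℕ} (A : Set ℝ) (g : ℝ → EuclideanSpace ℝ (Fin m)) (D : ℝ) : Prop :=
  ∃ lam > (0 : ℝ), ∀ x ∈ A, ∀ y ∈ A,
    lam * |x - y| ≤ ‖g x - g y‖ ∧ ‖g x - g y‖ ≤ lam * D * |x - y|

section LawOfCosinesBounds

variable {L D u v w s : ℝ}

theorem one_div_le_of_sq_eq_law_cos (hL : 0 < L) (hu : u ≤ L * D) (hv : 2 * L ≤ v)
    (hw₀ : 0 ≤ w) (hw : w ≤ L * D)
    (hlaw : w ^ 2 = u ^ 2 + v ^ 2 - 2 * u * v * s) (hs : √2 / 2 ≤ s) :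
    1 / s ≤ D := by
  have hs₀ : 0 < s := lt_of_lt_of_le (by positivity) hs
  rw [div_le_iff₀ hs₀]
  by_contra! hDs
  have hs_sq : 1 ≤ 2 * s ^ 2 := by
    have := pow_le_pow_left₀ (by positivity) hs 2
    rw [div_pow, Real.sq_sqrt zero_le_two] at this
    linarith
  have hD : D ≤ 2 * s := by nlinarith
  have hus : u * s ≤ L := by nlinarith
  have hv_mono : 0 ≤ (v - 2 * L) * (v + 2 * L - 2 * (u * s)) := by
    apply mul_nonneg <;> linarith
  have hu_mono : 0 ≤ (L * D - u) * (4 * L * s - u - L * D) := by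
    apply mul_nonneg <;> nlinarith
  have hgap : 0 < L ^ 2 * (1 - D * s) := by
    have : 0 < 1 - D * s := by linarith
    positivity
  have hw_sq : w ^ 2 ≤ (L * D) ^ 2 := pow_le_pow_left₀ hw₀ hw 2
  nlinarith

theorem sqrt_two_le_of_sq_eq_law_cos (hL : 0 < L) (hu₀ : 0 ≤ u) (hv : 2 * L ≤ v)
    (hw₀ : 0 ≤ w) (hw : w ≤ L * D)
    (hlaw : w ^ 2 = u ^ 2 + v ^ 2 - 2 * u * v * s) (hs : s ≤ √2 / 2) :
    √2 ≤ D := by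
  have h2 : √2 ^ 2 = 2 := Real.sq_sqrt zero_le_two
  have huv : 2 * u * v * s ≤ √2 * u * v := by
    have : 0 ≤ u * v := mul_nonneg hu₀ (by linarith)
    nlinarith
  have hw_sq : 2 * L ^ 2 ≤ w ^ 2 := by
    nlinarith [sq_nonneg (√2 * u - v)]
  have hD_sq : 2 ≤ D ^ 2 := by
    have : w ^ 2 ≤ (L * D) ^ 2 := pow_le_pow_left₀ hw₀ hw 2
    nlinarith [pow_pos hL 2]
  exact (Real.sqrt_le_left (nonneg_of_mul_nonneg_right (hw₀.trans hw) hL)).2 hD_sq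

end LawOfCosinesBounds

theorem norm_sub_sq_eq_of_cos_eq_inner_div {V : Type*} [NormedAddCommGroup V]
    [InnerProductSpace ℝ V] (x y : V) {α : ℝ} (hcos : Real.cos α = ⟪x, y⟫ / (‖x‖ * ‖y‖)) :
    ‖x - y‖ ^ 2 = ‖x‖ ^ 2 + ‖y‖ ^ 2 - 2 * ‖x‖ * ‖y‖ * Real.cos α := by
  rw [hcos, ← InnerProductGeometry.cos_angle, sq, sq, sq,
    InnerProductGeometry.norm_sub_sq_eq_norm_sq_add_norm_sq_sub_two_mul_norm_mul_norm_mul_cos_angle]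

theorem abs_sub_midpoint (a c : ℝ) : |a - (a + c) / 2| = |a - c| / 2 := by
  rw [show a - (a + c) / 2 = (a - c) / 2 by ring, abs_div, abs_two]

theorem abs_midpoint_sub (a c : ℝ) : |(a + c) / 2 - c| = |a - c| / 2 := by
  rw [show (a + c) / 2 - c = (a - c) / 2 by ring, abs_div, abs_two]

theorem angle_distortion_claim_general {m : ℕ} (a c : ℝ) (hac : a ≠ c) (b : ℝ) (hb : b = (a + c) / 2)
    (a' b' c' : EuclideanSpace ℝ (Fin m))
    (α : ℝ) (hα0 : 0 ≤ α) (hαπ : α ≤ Real.pi)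
    (hcos : Real.cos α = ⟪b' - a', c' - a'⟫ / (‖b' - a'‖ * ‖c' - a'‖))
    (g : ℝ → EuclideanSpace ℝ (Fin m)) (hga : g a = a') (hgb : g b = b') (hgc : g c = c')
    (D : ℝ) (hD : HasDistortionAtMost {a, b, c} g D) :
    (α ≤ Real.pi / 4 → 1 / Real.cos α ≤ D) ∧
    (Real.pi / 4 < α → Real.sqrt 2 ≤ D) ∧
    min (1 / Real.cos α) (Real.sqrt 2) ≤ D := by
  obtain ⟨lam, hlam, hg⟩ := hD
  subst hb hga hgb hgc
  set L := lam * (|a - c| / 2)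
  have hL : 0 < L := by have := abs_pos.2 (sub_ne_zero.2 hac); positivity
  have hu : ‖g ((a + c) / 2) - g a‖ ≤ L * D := by
    have := (hg a (by simp) ((a + c) / 2) (by simp)).2
    rwa [abs_sub_midpoint, norm_sub_rev, mul_right_comm] at this
  have hv : 2 * L ≤ ‖g c - g a‖ := by
    have := (hg a (by simp) c (by simp)).1
    rwa [norm_sub_rev, show lam * |a - c| = 2 * L by ring] at this
  have hw : ‖g ((a + c) / 2) - g c‖ ≤ L * D := by
    have := (hg ((a + c) / 2) (by simp) c (by simp)).2
    rwa [abs_midpoint_sub, mul_right_comm] at this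
  have hlaw := norm_sub_sq_eq_of_cos_eq_inner_div _ _ hcos
  rw [sub_sub_sub_cancel_right] at hlaw
  have h₁ (hα : α ≤ Real.pi / 4) : 1 / Real.cos α ≤ D :=
    one_div_le_of_sq_eq_law_cos hL hu hv (norm_nonneg _) hw hlaw <|
      Real.cos_pi_div_four ▸ Real.cos_le_cos_of_nonneg_of_le_pi hα0 (by linarith [Real.pi_pos]) hα
  have h₂ (hα : Real.pi / 4 < α) : √2 ≤ D :=
    sqrt_two_le_of_sq_eq_law_cos hL (norm_nonneg _) hv (norm_nonneg _) hw hlaw <|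
      Real.cos_pi_div_four ▸ Real.cos_le_cos_of_nonneg_of_le_pi (by positivity) hαπ hα.le
  refine ⟨h₁, h₂, ?_⟩
  rcases le_or_gt α (Real.pi / 4) with hα | hα
  · exact (min_le_left _ _).trans (h₁ hα)
  · exact (min_le_right _ _).trans (h₂ hα)

/-- **The angle claim.** Let `a ≠ c` be reals, `b = (a+c)/2`, and let `a', b', c' ∈ ℝᵐ` be
distinct. Let `α ∈ [0, π]` be the angle at `a'` between the segments `[a', b']` and `[a', c']`.
If `D` bounds the distortion of the three-point map `a ↦ a'`, `b ↦ b'`, `c ↦ c'`, then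
`D ≥ 1/cos α` when `α ≤ π/4`, and `D ≥ √2` when `α > π/4`; in particular
`D ≥ min (1/cos α) √2`. -/
theorem angle_distortion_claim {m : ℕ} (a c : ℝ) (hac : a ≠ c) (b : ℝ) (hb : b = (a + c) / 2)
    (a' b' c' : EuclideanSpace ℝ (Fin m))
    (hab' : a' ≠ b') (hac' : a' ≠ c') (hbc' : b' ≠ c')
    (α : ℝ) (hα0 : 0 ≤ α) (hαπ : α ≤ Real.pi)
    (hcos : Real.cos α = ⟪b' - a', c' - a'⟫ / (‖b' - a'‖ * ‖c' - a'‖))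
    (g : ℝ → EuclideanSpace ℝ (Fin m)) (hga : g a = a') (hgb : g b = b') (hgc : g c = c')
    (D : ℝ) (hD : HasDistortionAtMost {a, b, c} g D) :
    (α ≤ Real.pi / 4 → 1 / Real.cos α ≤ D) ∧
    (Real.pi / 4 < α → Real.sqrt 2 ≤ D) ∧
    min (1 / Real.cos α) (Real.sqrt 2) ≤ D :=
  angle_distortion_claim_general a c hac b hb a' b' c' α hα0 hαπ hcos g hga hgb hgc D hD
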